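/- Let Ω be a Zariski-open subset of ℂⁿ whose complement A = ℂⁿ \ Ω is nonempty and is the zero set of a single nonzero polynomial f, i.e., A = {z : f(z) = 0}. Then the function 1/f, holomorphic on Ω, cannot be approximated uniformly on all compact subsets of Ω by entire functions; hence Ω is not Runge in ℂⁿ. -/
import Mathlib

open MvPolynomial Polynomial Metric

/-- Let `A ⊆ ℂⁿ` be the nonempty zero set of a nonzero polynomial `f`, and
`Ω = ℂⁿ \ A`. Then `1/f`, holomorphic on `Ω`, cannot be approximated uniformly on all
compact subsets of `Ω` by entire functions; hence `Ω` is not Runge in `ℂⁿ`. -/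
theorem stmt8 {n : ℕ} (f : MvPolynomial (Fin n) ℂ) (hf : f ≠ 0)
    (hA : {z : Fin n → ℂ | MvPolynomial.eval z f = 0}.Nonempty) :
    ¬ (∀ K : Set (Fin n → ℂ), IsCompact K →
        K ⊆ {z : Fin n → ℂ | MvPolynomial.eval z f ≠ 0} → ∀ ε > (0 : ℝ),
        ∃ g : (Fin n → ℂ) → ℂ, Differentiable ℂ g ∧
          ∀ z ∈ K, ‖(MvPolynomial.eval z f)⁻¹ - g z‖ < ε) := by
  intro H
  obtain ⟨a, ha⟩ := hA
  have hb : ∃ b : Fin n → ℂ, MvPolynomial.eval b f ≠ 0 := by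
    by_contra h
    push_neg at h
    exact hf (MvPolynomial.funext fun x => by simp [h x])
  obtain ⟨b, hb⟩ := hb
  -- the restriction of f to the line through a and b, as a one-variable polynomial
  set γ : ℂ → (Fin n → ℂ) := fun t i => a i + t * (b i - a i) with hγ
  set P : Polynomial ℂ :=
    MvPolynomial.eval₂ Polynomial.C
      (fun i => Polynomial.C (a i) + Polynomial.C (b i - a i) * Polynomial.X) f with hP
  have hPeval : ∀ t : ℂ, P.eval t = MvPolynomial.eval (γ t) f := by
    intro t
    rw [hP, show (P.eval t = (Polynomial.evalRingHom t) P) from rfl,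
      MvPolynomial.eval₂_comp_left (Polynomial.evalRingHom t) Polynomial.C _ f]
    have h1 : (Polynomial.evalRingHom t).comp Polynomial.C = RingHom.id ℂ := by
      ext c; simp
    rw [h1, MvPolynomial.eval, MvPolynomial.coe_eval₂Hom]
    congr 1
    funext i
    simp [hγ]
    ring
  have hγ1 : γ 1 = b := by funext i; simp [hγ]
  have hγ0 : γ 0 = a := by funext i; simp [hγ]
  have hP1 : P.eval 1 = MvPolynomial.eval b f := by rw [hPeval 1, hγ1]
  have hP0 : P.eval 0 = 0 := by rw [hPeval 0, hγ0]; exact ha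
  have hPne : P ≠ 0 := fun h => hb (by rw [← hP1, h, Polynomial.eval_zero])
  -- choose a radius r > 0 avoiding the norms of the roots of P
  have hfin : ((fun z => ‖z‖) '' (P.rootSet ℂ)).Finite :=
    (P.rootSet_finite ℂ).image _
  obtain ⟨r, hr⟩ : ∃ r : ℝ, r ∈ Set.Ioi (0:ℝ) \ ((fun z => ‖z‖) '' (P.rootSet ℂ)) :=
    ((Set.Ioi_infinite (0:ℝ)).diff hfin).nonempty
  obtain ⟨hr0, hrS⟩ := hr
  rw [Set.mem_Ioi] at hr0
  -- the compact set K : image of the circle of radius r under γ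
  have hγcont : Continuous γ := by
    apply continuous_pi
    intro i
    continuity
  set K : Set (Fin n → ℂ) := γ '' (sphere (0:ℂ) r) with hK
  have hKc : IsCompact K := (isCompact_sphere _ _).image hγcont
  have hKΩ : K ⊆ {z : Fin n → ℂ | MvPolynomial.eval z f ≠ 0} := by
    rintro z ⟨t, ht, rfl⟩
    simp only [mem_sphere_iff_norm, sub_zero] at ht
    intro h0
    exact hrS ⟨t, by rw [Polynomial.mem_rootSet]; exact ⟨hPne, by rw [Polynomial.coe_aeval_eq_eval, hPeval]; exact h0⟩, ht⟩
  -- bound for ‖f‖ on K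
  obtain ⟨M, hM⟩ : ∃ M : ℝ, ∀ z ∈ K, ‖MvPolynomial.eval z f‖ ≤ M := by
    obtain ⟨M, hM⟩ := hKc.exists_bound_of_continuousOn
      (MvPolynomial.continuous_eval (p := f)).continuousOn
    exact ⟨M, hM⟩
  have hM0 : 0 ≤ M := by
    obtain ⟨t, ht⟩ : (sphere (0:ℂ) r).Nonempty := NormedSpace.sphere_nonempty.mpr hr0.le
    exact le_trans (norm_nonneg _) (hM _ ⟨t, ht, rfl⟩)
  -- apply the hypothesis
  obtain ⟨g, hg, hgK⟩ := H K hKc hKΩ ((M + 1)⁻¹ / 2) (by positivity)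
  -- the entire function h t = P(t) * g (γ t) - 1
  set h : ℂ → ℂ := fun t => P.eval t * g (γ t) - 1 with hh
  have hdiff : Differentiable ℂ h :=
    ((P.differentiable.mul (hg.comp (by
      apply differentiable_pi.mpr; intro i
      exact (differentiable_const _).add (differentiable_id.mul (differentiable_const _))))).sub
      (differentiable_const 1))
  have hbdd : ∀ t ∈ frontier (ball (0:ℂ) r), ‖h t‖ ≤ 1/2 := by
    intro t ht
    rw [frontier_ball _ hr0.ne'] at ht
    have hz : γ t ∈ K := ⟨t, ht, rfl⟩
    have hne : MvPolynomial.eval (γ t) f ≠ 0 := hKΩ hz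
    have : h t = P.eval t * (g (γ t) - (MvPolynomial.eval (γ t) f)⁻¹) := by
      rw [hh]
      simp only
      rw [mul_sub, hPeval t, mul_inv_cancel₀ hne]
    rw [this, norm_mul, hPeval t]
    calc ‖MvPolynomial.eval (γ t) f‖ * ‖g (γ t) - (MvPolynomial.eval (γ t) f)⁻¹‖
        ≤ M * ((M + 1)⁻¹ / 2) := by
          apply mul_le_mul (hM _ hz) ?_ (norm_nonneg _) hM0
          rw [← norm_neg, neg_sub]
          exact (hgK _ hz).le
      _ = (M * (M+1)⁻¹)/2 := by ring
      _ ≤ 1/2 := by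
          have : M * (M+1)⁻¹ ≤ 1 := by
            rw [mul_inv_le_iff₀ (by positivity)]; linarith
          linarith
  have h0 : ‖h 0‖ ≤ 1/2 := by
    apply Complex.norm_le_of_forall_mem_frontier_norm_le isBounded_ball
      hdiff.diffContOnCl hbdd
    rw [closure_ball _ hr0.ne']
    exact mem_closedBall_self hr0.le
  rw [hh] at h0
  simp only [hP0, zero_mul, zero_sub, norm_neg, norm_one] at h0
  linarith
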